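/- arXiv:1504.05474 — 2 statements merged into one kernel-verified Lean document; each statement's English description precedes it below -/
import Mathlib

section
/- Let D ∈ ℕ, D ≥ 1, z ∈ ℝ^D with z ≠ 0 and Mz ≥ 0 componentwise, and c ∈ ℝ. Then the polynomial g(ξ) = Σ_{d=1}^D z_d ξ^d + c is continuous and strictly monotone increasing on the interval [0,1]. -/
open Matrix Finset

/-- The lower-triangular matrix `M̃` with entries
`[M̃]_{i,j} = C(i-1, j-1) / C(D-1, j-1)` (here `0`-indexed: `C(i,j)/C(D-1,j)`). -/
noncomputable def Mtilde (D : ℕ) : Matrix (Fin D) (Fin D) ℝ :=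
  Matrix.of fun i j : Fin D =>
    if (j : ℕ) ≤ (i : ℕ) then
      ((i : ℕ).choose (j : ℕ) : ℝ) / ((D - 1).choose (j : ℕ) : ℝ)
    else 0

/-- `M = M̃ ⬝ diag(1, 2, …, D)`. -/
noncomputable def Mmat (D : ℕ) : Matrix (Fin D) (Fin D) ℝ :=
  Mtilde D * Matrix.diagonal fun d : Fin D => ((d : ℕ) : ℝ) + 1

lemma bern_key (n j : ℕ) (hj : j ≤ n) (ξ : ℝ) :
    ∑ i ∈ Finset.range (n+1),
      (if j ≤ i then ((i.choose j : ℝ)/(n.choose j : ℝ)) else 0) * (n.choose i : ℝ)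
        * ξ^i * (1-ξ)^(n-i) = ξ^j := by
  have hC : ((n.choose j : ℝ)) ≠ 0 := by
    exact_mod_cast (Nat.choose_pos hj).ne'
  have h1 : ∀ i ∈ Finset.range (n+1),
      (if j ≤ i then ((i.choose j : ℝ)/(n.choose j : ℝ)) else 0) * (n.choose i : ℝ)
        * ξ^i * (1-ξ)^(n-i)
      = ((i.choose j : ℝ)/(n.choose j : ℝ)) * (n.choose i : ℝ) * ξ^i * (1-ξ)^(n-i) := by
    intro i _
    split_ifs with h
    · rfl
    · rw [Nat.choose_eq_zero_of_lt (lt_of_not_ge h)]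
      simp
  rw [Finset.sum_congr rfl h1]
  have h2 : ∑ i ∈ Finset.range (n+1),
      ((i.choose j : ℝ)/(n.choose j : ℝ)) * (n.choose i : ℝ) * ξ^i * (1-ξ)^(n-i)
      = ∑ i ∈ Finset.Ico j (n+1),
      ((i.choose j : ℝ)/(n.choose j : ℝ)) * (n.choose i : ℝ) * ξ^i * (1-ξ)^(n-i) := by
    refine (Finset.sum_subset ?_ ?_).symm
    · intro i hi
      simp only [Finset.mem_Ico, Finset.mem_range] at *
      exact hi.2
    · intro i hi hni
      simp only [Finset.mem_Ico, Finset.mem_range] at *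
      have : i < j := by omega
      rw [Nat.choose_eq_zero_of_lt this]
      simp
  rw [h2, Finset.sum_Ico_eq_sum_range]
  have hrange : n + 1 - j = (n - j) + 1 := by omega
  rw [hrange]
  have h3 : ∀ k ∈ Finset.range ((n-j)+1),
      (((j+k).choose j : ℝ)/(n.choose j : ℝ)) * (n.choose (j+k) : ℝ) * ξ^(j+k) * (1-ξ)^(n-(j+k))
      = ξ^j * (ξ^k * (1-ξ)^((n-j)-k) * ((n-j).choose k : ℝ)) := by
    intro k hk
    simp only [Finset.mem_range] at hk
    have hkn : j + k ≤ n := by omega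
    have hid : (n.choose (j+k) : ℝ) * ((j+k).choose j : ℝ)
        = (n.choose j : ℝ) * ((n-j).choose k : ℝ) := by
      have := Nat.choose_mul (n := n) (Nat.le_add_right j k)
      have h' : (j + k) - j = k := by omega
      rw [h'] at this
      exact_mod_cast this
    have hsub : n - (j+k) = (n-j) - k := by omega
    have hq : (((j+k).choose j : ℝ)/(n.choose j : ℝ)) * (n.choose (j+k) : ℝ)
        = ((n-j).choose k : ℝ) := by
      field_simp
      linarith [hid]
    rw [hsub, pow_add]
    linear_combination (ξ^j * ξ^k * (1-ξ)^((n-j)-k)) * hq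
  rw [Finset.sum_congr rfl h3, ← Finset.mul_sum, ← add_pow ξ (1-ξ) (n-j)]
  simp

/-- If `z ≠ 0` and `Mz ≥ 0` componentwise, then
`g(ξ) = Σ_{d=1}^D z_d ξ^d + c` is continuous and strictly monotone
increasing on `[0,1]`. -/
theorem monotone_polynomial_of_cone (D : ℕ) (hD : 1 ≤ D)
    (z : Fin D → ℝ) (hz : z ≠ 0)
    (hMz : ∀ i : Fin D, 0 ≤ (Mmat D).mulVec z i) (c : ℝ)
    (g : ℝ → ℝ)
    (hg : ∀ ξ : ℝ, g ξ = (∑ d : Fin D, z d * ξ ^ ((d : ℕ) + 1)) + c) :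
    ContinuousOn g (Set.Icc (0 : ℝ) 1) ∧ StrictMonoOn g (Set.Icc (0 : ℝ) 1) := by
  classical
  set n := D - 1 with hn
  have hDn : D = n + 1 := by omega
  -- the derivative polynomial
  set P : Polynomial ℝ :=
    ∑ d : Fin D, Polynomial.C ((((d : ℕ) : ℝ) + 1) * z d) * Polynomial.X ^ (d : ℕ) with hP
  have hPeval : ∀ ξ : ℝ, P.eval ξ = ∑ d : Fin D, (((d : ℕ) : ℝ) + 1) * z d * ξ ^ (d : ℕ) := by
    intro ξ
    simp [hP, Polynomial.eval_finset_sum]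
  -- derivative of g
  have hgd : ∀ ξ : ℝ, HasDerivAt g (P.eval ξ) ξ := by
    intro ξ
    have hfun : g = fun ξ : ℝ => (∑ d : Fin D, z d * ξ ^ ((d : ℕ) + 1)) + c := funext hg
    rw [hfun, hPeval]
    have : HasDerivAt (fun ξ : ℝ => ∑ d : Fin D, z d * ξ ^ ((d : ℕ) + 1))
        (∑ d : Fin D, (((d : ℕ) : ℝ) + 1) * z d * ξ ^ (d : ℕ)) ξ := by
      refine HasDerivAt.fun_sum fun d _ => ?_
      have h1 : HasDerivAt (fun ξ : ℝ => ξ ^ ((d : ℕ) + 1))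
          ((((d : ℕ) + 1 : ℕ) : ℝ) * ξ ^ (d : ℕ)) ξ := by
        simpa using hasDerivAt_pow ((d : ℕ) + 1) ξ
      have := h1.const_mul (z d)
      convert this using 1
      · rfl
      push_cast
      ring
    exact this.add_const c
  -- P is not the zero polynomial
  have hP0 : P ≠ 0 := by
    obtain ⟨d, hd⟩ := Function.ne_iff.mp hz
    simp only [Pi.zero_apply] at hd
    intro h
    have hc : P.coeff (d : ℕ) = (((d : ℕ) : ℝ) + 1) * z d := by
      rw [hP, Polynomial.finset_sum_coeff]
      rw [Finset.sum_eq_single d]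
      · simp only [Polynomial.coeff_C_mul, Polynomial.coeff_X_pow, if_pos rfl, mul_one, if_true]
      · intro b _ hb
        have hne : (d : ℕ) ≠ (b : ℕ) := fun hh => hb (Fin.ext hh.symm)
        simp only [Polynomial.coeff_C_mul, Polynomial.coeff_X_pow, if_neg hne, mul_zero]
      · intro hmem
        exact absurd (Finset.mem_univ d) hmem
    rw [h] at hc
    simp only [Polynomial.coeff_zero] at hc
    have : (((d : ℕ) : ℝ) + 1) ≠ 0 := by positivity
    exact hd (by
      have := hc.symm
      rcases mul_eq_zero.mp this with h' | h'
      · exact absurd h' ‹_›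
      · exact h')
  -- Bernstein expansion: key identity
  have key : ∀ (j : Fin D) (ξ : ℝ),
      ∑ i : Fin D, Mtilde D i j * (n.choose (i : ℕ) : ℝ) * ξ ^ (i : ℕ) * (1-ξ) ^ (n - (i : ℕ))
        = ξ ^ (j : ℕ) := by
    intro j ξ
    have hj : (j : ℕ) ≤ n := by omega
    have := bern_key n (j : ℕ) hj ξ
    rw [← this]
    rw [show (n + 1) = D from hDn.symm]
    rw [← Fin.sum_univ_eq_sum_range (fun i : ℕ =>
      (if (j : ℕ) ≤ i then ((i.choose (j : ℕ) : ℝ)/(n.choose (j : ℕ) : ℝ)) else 0)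
        * (n.choose i : ℝ) * ξ^i * (1-ξ)^(n-i)) D]
    refine Finset.sum_congr rfl fun i _ => ?_
    simp only [Mtilde, Matrix.of_apply, hn]
  -- nonnegativity of the derivative on [0,1]
  have hnonneg : ∀ ξ ∈ Set.Icc (0 : ℝ) 1, 0 ≤ P.eval ξ := by
    intro ξ hξ
    have hb : ∀ i : Fin D, (Mmat D).mulVec z i
        = ∑ j : Fin D, Mtilde D i j * (((j : ℕ) : ℝ) + 1) * z j := by
      intro i
      simp [Mmat, Matrix.mulVec, dotProduct, Matrix.mul_diagonal, mul_comm, mul_assoc]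
    have hcalc : P.eval ξ = ∑ i : Fin D, (Mmat D).mulVec z i
        * ((n.choose (i : ℕ) : ℝ) * ξ ^ (i : ℕ) * (1-ξ) ^ (n - (i : ℕ))) := by
      rw [hPeval]
      calc ∑ j : Fin D, (((j : ℕ) : ℝ) + 1) * z j * ξ ^ (j : ℕ)
          = ∑ j : Fin D, (((j : ℕ) : ℝ) + 1) * z j *
            (∑ i : Fin D, Mtilde D i j * (n.choose (i : ℕ) : ℝ) * ξ ^ (i : ℕ)
              * (1-ξ) ^ (n - (i : ℕ))) := by
            refine Finset.sum_congr rfl fun j _ => ?_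
            rw [key j ξ]
        _ = ∑ j : Fin D, ∑ i : Fin D, (((j : ℕ) : ℝ) + 1) * z j *
            (Mtilde D i j * (n.choose (i : ℕ) : ℝ) * ξ ^ (i : ℕ)
              * (1-ξ) ^ (n - (i : ℕ))) := by
            refine Finset.sum_congr rfl fun j _ => ?_
            rw [Finset.mul_sum]
        _ = ∑ i : Fin D, ∑ j : Fin D, (((j : ℕ) : ℝ) + 1) * z j *
            (Mtilde D i j * (n.choose (i : ℕ) : ℝ) * ξ ^ (i : ℕ)
              * (1-ξ) ^ (n - (i : ℕ))) := Finset.sum_comm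
        _ = ∑ i : Fin D, (∑ j : Fin D, Mtilde D i j * (((j : ℕ) : ℝ) + 1) * z j)
            * ((n.choose (i : ℕ) : ℝ) * ξ ^ (i : ℕ) * (1-ξ) ^ (n - (i : ℕ))) := by
            refine Finset.sum_congr rfl fun i _ => ?_
            rw [Finset.sum_mul]
            refine Finset.sum_congr rfl fun j _ => ?_
            ring
        _ = _ := by
            refine Finset.sum_congr rfl fun i _ => ?_
            rw [hb i]
    rw [hcalc]
    refine Finset.sum_nonneg fun i _ => mul_nonneg (hMz i) ?_
    have h1 : (0:ℝ) ≤ ξ := hξ.1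
    have h2 : (0:ℝ) ≤ 1 - ξ := by linarith [hξ.2]
    positivity
  -- continuity
  have hcont : ContinuousOn g (Set.Icc (0 : ℝ) 1) :=
    (Differentiable.continuous fun ξ => (hgd ξ).differentiableAt).continuousOn
  refine ⟨hcont, ?_⟩
  -- monotonicity
  have hmono : MonotoneOn g (Set.Icc (0 : ℝ) 1) := by
    refine monotoneOn_of_deriv_nonneg (convex_Icc 0 1) hcont
      (fun x _ => (hgd x).differentiableAt.differentiableWithinAt) fun x hx => ?_
    rw [(hgd x).deriv]
    exact hnonneg x (interior_subset hx)
  intro x hx y hy hxy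
  rcases lt_or_eq_of_le (hmono hx hy hxy.le) with h | h
  · exact h
  · exfalso
    have hconst : ∀ t ∈ Set.Icc x y, g t = g x := by
      intro t ht
      have htI : t ∈ Set.Icc (0 : ℝ) 1 := ⟨le_trans hx.1 ht.1, le_trans ht.2 hy.2⟩
      have h1 := hmono hx htI ht.1
      have h2 := hmono htI hy ht.2
      rw [← h] at h2
      linarith
    have hroot : Set.Ioo x y ⊆ {t | P.IsRoot t} := by
      intro t ht
      have heq : g =ᶠ[nhds t] fun _ => g x :=
        Filter.eventuallyEq_of_mem (Ioo_mem_nhds ht.1 ht.2)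
          fun u hu => hconst u ⟨hu.1.le, hu.2.le⟩
      have h0 : HasDerivAt g 0 t :=
        (hasDerivAt_const t (g x)).congr_of_eventuallyEq heq
      have := (hgd t).unique h0
      simpa [Polynomial.IsRoot] using this
    exact hP0 (Polynomial.eq_zero_of_infinite_isRoot P
      ((Set.infinite_coe_iff.mp (Set.Ioo.infinite hxy)).mono hroot))
end

section
/- Let K ∈ ℕ, K ≥ 1, and let h : [0,1]^K → ℝ be square-integrable. Define h_∅ = ∫_{[0,1]^K} h(x) dx and, for k ∈ {1,…,K}, h_k(t) = ∫_{[0,1]^{K−1}} h(x₁,…,x_{k−1}, t, x_{k+1},…,x_K) dx_{−k} − h_∅. Then h is of order one, i.e., h(x) = h_∅ + Σ_{k=1}^K h_k(x_k) for almost every x ∈ [0,1]^K, if and only if Σ_{k=1}^K σ_k²(h) = σ²(h). -/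
open MeasureTheory Matrix Finset

/-- The unit cube `[0,1]^K`. -/
def box (K : ℕ) : Set (Fin K → ℝ) := Set.univ.pi fun _ => Set.Icc (0 : ℝ) 1

/-- The marginal of `h` in the `k`-th variable:
`t ↦ ∫_{[0,1]^{K-1}} h(x₁,…,x_{k-1}, t, x_{k+1},…,x_K) dx_{−k}`. -/
noncomputable def marg (K : ℕ) (h : (Fin K → ℝ) → ℝ) (k : Fin K) (t : ℝ) : ℝ :=
  ∫ x in box K, h (Function.update x k t)

/-- Total variance `σ²(h) = ∫_{[0,1]^K} h(x)² dx − (∫_{[0,1]^K} h(x) dx)²`. -/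
noncomputable def totalVar (K : ℕ) (h : (Fin K → ℝ) → ℝ) : ℝ :=
  (∫ x in box K, (h x) ^ 2) - (∫ x in box K, h x) ^ 2

/-- First-order ANOVA variance
`σ_k²(h) = ∫₀¹ (marginal of h at t − ∫ h)² dt`. -/
noncomputable def firstVar (K : ℕ) (h : (Fin K → ℝ) → ℝ) (k : Fin K) : ℝ :=
  ∫ t in Set.Icc (0 : ℝ) 1, (marg K h k t - ∫ x in box K, h x) ^ 2

/-! Write `s x = ∑ₖ mₖ (x k)` for the marginals `mₖ` of `h`; being of order one means that
`h - s` is a.e. constant, i.e. `Var (h - s) = 0`. Fubini in the `k`-th coordinate gives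
`Cov (h, g (x k)) = Cov (mₖ, g)`, so `Cov (h, s) = ∑ₖ Var mₖ`, and independence of the coordinates
gives `Var s = ∑ₖ Var mₖ`. Hence `Var (h - s) = Var h - ∑ₖ Var mₖ`, where `Var h = σ²(h)` and
`Var mₖ = σₖ²(h)`. -/

open ProbabilityTheory

section

variable {Ω : Type*} [MeasurableSpace Ω] {P : Measure Ω} [IsProbabilityMeasure P] {X : Ω → ℝ}

theorem sq_integral_le_integral_sq (hX : MemLp X 2 P) :
    (∫ ω, X ω ∂P) ^ 2 ≤ ∫ ω, X ω ^ 2 ∂P := by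
  have := variance_nonneg X P
  rw [variance_eq_sub hX] at this
  simpa using this

theorem ae_eq_integral_iff_variance_eq_zero (hX : MemLp X 2 P) :
    (∀ᵐ ω ∂P, X ω = ∫ ω, X ω ∂P) ↔ Var[X; P] = 0 := by
  refine ⟨fun h => ?_, ae_eq_integral_of_variance_eq_zero hX⟩
  rw [variance_eq_integral hX.aemeasurable]
  exact integral_eq_zero_of_ae (by filter_upwards [h] with ω hω; simp [hω])

end

namespace ANOVA

variable {ι : Type*} [Fintype ι] [DecidableEq ι] {α : ι → Type*} [∀ i, MeasurableSpace (α i)]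
  {μ : ∀ i, Measure (α i)} [∀ i, IsProbabilityMeasure (μ i)]

omit [Fintype ι] in
theorem measurable_update_prod (k : ι) :
    Measurable fun p : α k × (∀ i, α i) => Function.update p.2 k p.1 :=
  measurable_update' (a := k) |>.comp measurable_swap

theorem measurePreserving_update (k : ι) :
    MeasurePreserving (fun p : α k × (∀ i, α i) => Function.update p.2 k p.1)
      ((μ k).prod (Measure.pi μ)) (Measure.pi μ) := by
  refine ⟨measurable_update_prod k, (Measure.pi_eq fun s hs => ?_).symm⟩
  have hpre : (fun p : α k × (∀ i, α i) => Function.update p.2 k p.1) ⁻¹' Set.univ.pi s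
      = s k ×ˢ Set.univ.pi (Function.update s k Set.univ) := by
    ext ⟨t, y⟩
    simp only [Set.mem_preimage, Set.mem_univ_pi, Set.mem_prod]
    rw [Function.forall_update_iff (p := fun i (a : α i) => a ∈ s i),
      Function.forall_update_iff (p := fun i (S : Set (α i)) => y i ∈ S)]
    simp
  rw [Measure.map_apply (measurable_update_prod k) (.univ_pi hs), hpre, Measure.prod_prod,
    Measure.pi_pi, ← Finset.mul_prod_erase _ (fun i => μ i (s i)) (Finset.mem_univ k),
    ← Finset.mul_prod_erase _ (fun i => μ i (Function.update s k Set.univ i)) (Finset.mem_univ k),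
    Function.update_self, measure_univ, one_mul]
  congr 1
  exact Finset.prod_congr rfl fun i hi => by rw [Function.update_of_ne (Finset.ne_of_mem_erase hi)]

variable {f : (∀ i, α i) → ℝ}

noncomputable def marginal (μ : ∀ i, Measure (α i)) (f : (∀ i, α i) → ℝ) (k : ι) (t : α k) : ℝ :=
  ∫ y, f (Function.update y k t) ∂Measure.pi μ

theorem integrable_comp_update (hf : Integrable f (Measure.pi μ)) (k : ι) :
    Integrable (fun p : α k × (∀ i, α i) => f (Function.update p.2 k p.1))
      ((μ k).prod (Measure.pi μ)) :=
  (measurePreserving_update k).integrable_comp_of_integrable hf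

theorem integral_eq_integral_integral_update (hf : Integrable f (Measure.pi μ)) (k : ι) :
    ∫ x, f x ∂Measure.pi μ = ∫ t, ∫ y, f (Function.update y k t) ∂Measure.pi μ ∂μ k := by
  have hmap := (measurePreserving_update (μ := μ) k).map_eq
  conv_lhs => rw [← hmap]
  rw [integral_map (measurable_update_prod k).aemeasurable
    (by rw [hmap]; exact hf.aestronglyMeasurable)]
  exact integral_prod _ (integrable_comp_update hf k)

theorem integrable_marginal (hf : Integrable f (Measure.pi μ)) (k : ι) :
    Integrable (marginal μ f k) (μ k) :=
  (integrable_comp_update hf k).integral_prod_left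

theorem integral_marginal (hf : Integrable f (Measure.pi μ)) (k : ι) :
    ∫ t, marginal μ f k t ∂μ k = ∫ x, f x ∂Measure.pi μ :=
  (integral_eq_integral_integral_update hf k).symm

theorem memLp_marginal (hf : MemLp f 2 (Measure.pi μ)) (k : ι) :
    MemLp (marginal μ f k) 2 (μ k) := by
  have hF := integrable_comp_update (hf.integrable one_le_two) k
  have hF2 := integrable_comp_update hf.integrable_sq k
  have hm := (integrable_marginal (hf.integrable one_le_two) k).aestronglyMeasurable
  refine (memLp_two_iff_integrable_sq hm).mpr <| hF2.integral_prod_left.mono' (hm.pow 2) ?_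
  filter_upwards [hF.prod_right_ae, hF2.prod_right_ae] with t hslice hslice2
  rw [Real.norm_of_nonneg (sq_nonneg _)]
  exact sq_integral_le_integral_sq
    ((memLp_two_iff_integrable_sq hslice.aestronglyMeasurable).mpr hslice2)

theorem memLp_marginal_comp_eval (hf : MemLp f 2 (Measure.pi μ)) (k : ι) :
    MemLp (fun x => marginal μ f k (x k)) 2 (Measure.pi μ) :=
  (memLp_marginal hf k).comp_measurePreserving (measurePreserving_eval μ k)

theorem integral_mul_comp_eval {k : ι} {g : α k → ℝ}
    (hfg : Integrable (fun x => f x * g (x k)) (Measure.pi μ)) :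
    ∫ x, f x * g (x k) ∂Measure.pi μ = ∫ t, marginal μ f k t * g t ∂μ k := by
  rw [integral_eq_integral_integral_update hfg k]
  simp only [Function.update_self, integral_mul_const]
  rfl

theorem covariance_comp_eval (hf : MemLp f 2 (Measure.pi μ)) {k : ι} {g : α k → ℝ}
    (hg : MemLp g 2 (μ k)) :
    cov[f, fun x => g (x k); Measure.pi μ] = cov[marginal μ f k, g; μ k] := by
  have hgk : MemLp (fun x => g (x k)) 2 (Measure.pi μ) :=
    hg.comp_measurePreserving (measurePreserving_eval μ k)
  rw [covariance_eq_sub hf hgk, covariance_eq_sub (memLp_marginal hf k) hg]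
  simp only [Pi.mul_apply]
  rw [integral_mul_comp_eval (hf.integrable_mul hgk), integral_comp_eval hg.aestronglyMeasurable,
    integral_marginal (hf.integrable one_le_two)]

theorem variance_sub_sum_marginal (hf : MemLp f 2 (Measure.pi μ)) :
    Var[f - ∑ k, fun x => marginal μ f k (x k); Measure.pi μ]
      = Var[f; Measure.pi μ] - ∑ k, Var[marginal μ f k; μ k] := by
  have hm := memLp_marginal hf
  have he := memLp_marginal_comp_eval hf
  have hcov : cov[f, ∑ k, fun x => marginal μ f k (x k); Measure.pi μ]
      = ∑ k, Var[marginal μ f k; μ k] := by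
    rw [covariance_sum_right he hf]
    refine Finset.sum_congr rfl fun k _ => ?_
    rw [covariance_comp_eval hf (hm k), covariance_self (hm k).aemeasurable]
  rw [variance_sub hf (memLp_finsetSum' _ fun k _ => he k), hcov, variance_sum_pi hm]
  ring

theorem ae_eq_sum_marginal_iff (hf : MemLp f 2 (Measure.pi μ)) :
    (∀ᵐ x ∂Measure.pi μ, f x = (∫ x, f x ∂Measure.pi μ)
        + ∑ k, (marginal μ f k (x k) - ∫ x, f x ∂Measure.pi μ)) ↔
      ∑ k, Var[marginal μ f k; μ k] = Var[f; Measure.pi μ] := by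
  set c := ∫ x, f x ∂Measure.pi μ
  set X := f - ∑ k, fun x => marginal μ f k (x k)
  have he := memLp_marginal_comp_eval hf
  have hX : MemLp X 2 (Measure.pi μ) := hf.sub (memLp_finsetSum' _ fun k _ => he k)
  have hEX : ∫ x, X x ∂Measure.pi μ = c - ∑ _k : ι, c := by
    have hint : ∀ k, ∫ x, marginal μ f k (x k) ∂Measure.pi μ = c := fun k => by
      rw [integral_comp_eval (memLp_marginal hf k).aestronglyMeasurable,
        integral_marginal (hf.integrable one_le_two)]
    simp only [X, Pi.sub_apply, Finset.sum_apply]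
    rw [integral_sub (hf.integrable one_le_two)
      (integrable_finsetSum _ fun k _ => (he k).integrable one_le_two),
      integral_finsetSum _ fun k _ => (he k).integrable one_le_two]
    simp only [hint, c]
  rw [eq_comm, ← sub_eq_zero, ← variance_sub_sum_marginal hf,
    ← ae_eq_integral_iff_variance_eq_zero hX, hEX]
  refine Filter.eventually_congr (.of_forall fun x => ?_)
  simp only [X, Pi.sub_apply, Finset.sum_apply, Finset.sum_sub_distrib]
  constructor <;> intro h <;> linarith

end ANOVA

open ANOVA

instance : IsProbabilityMeasure (volume.restrict (Set.Icc (0 : ℝ) 1)) :=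
  ⟨by simp [Real.volume_Icc]⟩

theorem volume_restrict_box (K : ℕ) :
    volume.restrict (box K) = Measure.pi fun _ => volume.restrict (Set.Icc (0 : ℝ) 1) :=
  Measure.restrict_pi_pi _ _

instance (K : ℕ) : IsProbabilityMeasure (volume.restrict (box K)) := by
  rw [volume_restrict_box]
  infer_instance

theorem marg_eq_marginal (K : ℕ) (h : (Fin K → ℝ) → ℝ) (k : Fin K) :
    marg K h k = marginal (fun _ => volume.restrict (Set.Icc (0 : ℝ) 1)) h k := by
  ext t
  rw [marg, volume_restrict_box, marginal]

theorem totalVar_eq_variance {K : ℕ} {h : (Fin K → ℝ) → ℝ}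
    (hh : MemLp h 2 (volume.restrict (box K))) :
    totalVar K h = Var[h; volume.restrict (box K)] := by
  rw [variance_eq_sub hh, totalVar]
  rfl

theorem firstVar_eq_variance {K : ℕ} {h : (Fin K → ℝ) → ℝ}
    (hh : Integrable h (volume.restrict (box K))) (k : Fin K) :
    firstVar K h k = Var[marg K h k; volume.restrict (Set.Icc (0 : ℝ) 1)] := by
  rw [volume_restrict_box] at hh
  rw [marg_eq_marginal, variance_eq_integral (integrable_marginal hh k).aemeasurable, firstVar,
    marg_eq_marginal, integral_marginal hh, volume_restrict_box]

theorem order_one_iff_sum_firstVar_eq_totalVar_general (K : ℕ)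
    (h : (Fin K → ℝ) → ℝ)
    (hh : MemLp h 2 (volume.restrict (box K)))
    (h0 : ℝ) (hh0 : h0 = ∫ x in box K, h x)
    (hk : Fin K → ℝ → ℝ)
    (hhk : ∀ (k : Fin K) (t : ℝ), hk k t = marg K h k t - h0) :
    (∀ᵐ x ∂(volume.restrict (box K)), h x = h0 + ∑ k, hk k (x k)) ↔
      ∑ k : Fin K, firstVar K h k = totalVar K h := by
  obtain rfl : hk = fun k t => marg K h k t - h0 := funext₂ hhk
  subst hh0
  simp only [firstVar_eq_variance (hh.integrable one_le_two), totalVar_eq_variance hh,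
    marg_eq_marginal]
  rw [volume_restrict_box] at hh ⊢
  exact ae_eq_sum_marginal_iff hh

/-- A square-integrable `h` is of order one, i.e. almost everywhere equal to
`h_∅ + Σ_k h_k(x_k)` with `h_∅ = ∫ h` and `h_k(t) = (marginal of h at t) − h_∅`,
if and only if the first-order ANOVA variances sum up to the total variance. -/
theorem order_one_iff_sum_firstVar_eq_totalVar (K : ℕ) (hK : 1 ≤ K)
    (h : (Fin K → ℝ) → ℝ)
    (hh : MemLp h 2 (volume.restrict (box K)))
    (h0 : ℝ) (hh0 : h0 = ∫ x in box K, h x)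
    (hk : Fin K → ℝ → ℝ)
    (hhk : ∀ (k : Fin K) (t : ℝ), hk k t = marg K h k t - h0) :
    (∀ᵐ x ∂(volume.restrict (box K)), h x = h0 + ∑ k, hk k (x k)) ↔
      ∑ k : Fin K, firstVar K h k = totalVar K h :=
  order_one_iff_sum_firstVar_eq_totalVar_general K h hh h0 hh0 hk hhk
end
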